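/- arXiv:2410.18532 — 3 statements merged into one kernel-verified Lean document; each statement's English description precedes it below -/
import Mathlib

section
/- Let δ > 0, n ≥ 1 an integer, and A > 0. Let g : [0,∞) → [0,∞) be a non-increasing function such that s · g(t+s) ≤ A^{1/n} · g(t)^{1+δ} for all t ≥ 0 and all s ∈ [0,1]. If there exists t₀ ≥ 0 with g(t₀) ≤ (2ⁿ A)^{-1/(δ n)}, then g(t) = 0 for all t ≥ t₀ + (1 - 2^{-δ})^{-1}. -/
open Real Set

theorem stmt0 (δ A : ℝ) (n : ℕ) (hδ : 0 < δ) (hn : 1 ≤ n) (hA : 0 < A)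
    (g : ℝ → ℝ) (hg0 : ∀ t, 0 ≤ t → 0 ≤ g t)
    (hmono : ∀ t s, 0 ≤ t → t ≤ s → g s ≤ g t)
    (hrec : ∀ t s, 0 ≤ t → s ∈ Set.Icc (0:ℝ) 1 →
      s * g (t + s) ≤ A ^ ((1:ℝ)/n) * g t ^ (1 + δ))
    (t₀ : ℝ) (ht₀ : 0 ≤ t₀)
    (hsmall : g t₀ ≤ ((2:ℝ) ^ n * A) ^ (-(1 / (δ * n)))) :
    ∀ t, t₀ + (1 - (2:ℝ) ^ (-δ))⁻¹ ≤ t → g t = 0 := by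
  set B := A ^ ((1:ℝ)/n) with hB
  set M := ((2:ℝ) ^ n * A) ^ (-(1 / (δ * n))) with hM
  set r := (2:ℝ) ^ (-δ) with hr
  have hnR : (0:ℝ) < n := by exact_mod_cast Nat.lt_of_lt_of_le Nat.zero_lt_one hn
  have hbase : (0:ℝ) < (2:ℝ) ^ n * A := by positivity
  have hMpos : 0 < M := Real.rpow_pos_of_pos hbase _
  have hBpos : 0 < B := Real.rpow_pos_of_pos hA _
  have hr0 : 0 < r := Real.rpow_pos_of_pos two_pos _
  have hr1 : r < 1 := Real.rpow_lt_one_of_one_lt_of_neg one_lt_two (by linarith)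
  -- key constant identity
  have hKB : B * M ^ δ = 1 / 2 := by
    have h1 : M ^ δ = ((2:ℝ) ^ n * A) ^ (-(1 / (n:ℝ))) := by
      rw [hM, ← Real.rpow_mul hbase.le]
      congr 1
      field_simp
    have h2 : ((2:ℝ) ^ n * A) ^ (-(1 / (n:ℝ))) = 2⁻¹ * A ^ (-(1 / (n:ℝ))) := by
      rw [Real.mul_rpow (by positivity) hA.le]
      congr 1
      rw [← Real.rpow_natCast (2:ℝ) n, ← Real.rpow_mul (by norm_num)]
      rw [show (n:ℝ) * (-(1 / (n:ℝ))) = -1 by field_simp]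
      rw [Real.rpow_neg_one]
    rw [h1, h2, hB, ← mul_assoc, mul_comm (A ^ ((1:ℝ)/n)) 2⁻¹, mul_assoc,
      ← Real.rpow_add hA]
    norm_num
  set T : ℕ → ℝ := fun j => t₀ + ∑ k ∈ Finset.range j, r ^ k with hT
  have hT0 : ∀ j, 0 ≤ T j := by
    intro j
    have : 0 ≤ ∑ k ∈ Finset.range j, r ^ k :=
      Finset.sum_nonneg fun k _ => pow_nonneg hr0.le k
    simp only [hT]; linarith
  have hTstep : ∀ j, T (j + 1) = T j + r ^ j := by
    intro j
    simp [hT, Finset.sum_range_succ, add_assoc]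
  -- the iteration
  have key : ∀ j, g (T j) ≤ M / 2 ^ j := by
    intro j
    induction j with
    | zero => simpa [hT] using hsmall
    | succ j ih =>
      have h0Tj : 0 ≤ T j := hT0 j
      have hrj0 : 0 < r ^ j := pow_pos hr0 j
      have hrec' := hrec (T j) (r ^ j) h0Tj
        ⟨hrj0.le, pow_le_one₀ hr0.le hr1.le⟩
      rw [← hTstep j] at hrec'
      have hgT : 0 ≤ g (T j) := hg0 _ h0Tj
      have h1 : g (T j) ^ (1 + δ) ≤ (M / 2 ^ j) ^ (1 + δ) :=
        Real.rpow_le_rpow hgT ih (by linarith)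
      have h2 : g (T (j + 1)) ≤ B * (M / 2 ^ j) ^ (1 + δ) / r ^ j := by
        rw [le_div_iff₀ hrj0]
        calc g (T (j + 1)) * r ^ j = r ^ j * g (T (j + 1)) := by ring
        _ ≤ B * g (T j) ^ (1 + δ) := hrec'
        _ ≤ B * (M / 2 ^ j) ^ (1 + δ) := by
            exact mul_le_mul_of_nonneg_left h1 hBpos.le
      have heq : B * (M / 2 ^ j) ^ (1 + δ) / r ^ j = M / 2 ^ (j + 1) := by
        have hx : (0:ℝ) < M / 2 ^ j := by positivity
        have e1 : (M / 2 ^ j) ^ (1 + δ) = (M / 2 ^ j) * (M / 2 ^ j) ^ δ := by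
          rw [Real.rpow_add hx, Real.rpow_one]
        have e2 : (M / 2 ^ j) ^ δ = M ^ δ / ((2:ℝ) ^ δ) ^ j := by
          rw [Real.div_rpow hMpos.le (by positivity)]
          congr 1
          rw [← Real.rpow_natCast (2:ℝ) j, ← Real.rpow_mul (by norm_num),
            mul_comm, Real.rpow_mul (by norm_num : (0:ℝ) ≤ 2),
            Real.rpow_natCast]
        have e3 : r ^ j = (((2:ℝ) ^ δ) ^ j)⁻¹ := by
          rw [hr, Real.rpow_neg (by norm_num : (0:ℝ) ≤ 2), inv_pow]
        have h2δ : (0:ℝ) < ((2:ℝ) ^ δ) ^ j := by positivity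
        rw [e1, e2, e3]
        have e4 : B * (M / 2 ^ j * (M ^ δ / (2 ^ δ) ^ j)) / ((2 ^ δ) ^ j)⁻¹
            = (B * M ^ δ) * (M / 2 ^ j) := by
          field_simp
        rw [e4, hKB, pow_succ]
        ring
      calc g (T (j + 1)) ≤ B * (M / 2 ^ j) ^ (1 + δ) / r ^ j := h2
      _ = M / 2 ^ (j + 1) := heq
  -- pass to the limit
  intro t ht
  have hsum_le : ∀ j, ∑ k ∈ Finset.range j, r ^ k ≤ (1 - r)⁻¹ := by
    intro j
    have h := Summable.sum_le_tsum (Finset.range j) (fun k _ => (pow_nonneg hr0.le k))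
      (summable_geometric_of_lt_one hr0.le hr1)
    rwa [tsum_geometric_of_lt_one hr0.le hr1] at h
  have hTle : ∀ j, T j ≤ t := fun j => le_trans (by
    simp only [hT]; linarith [hsum_le j]) ht
  have hgle : ∀ j, g t ≤ M / 2 ^ j := fun j =>
    le_trans (hmono (T j) t (hT0 j) (hTle j)) (key j)
  have htend : Filter.Tendsto (fun j : ℕ => M / 2 ^ j) Filter.atTop (nhds 0) := by
    simpa using Filter.Tendsto.const_mul M
      (tendsto_pow_atTop_nhds_zero_of_lt_one (by norm_num : (0:ℝ) ≤ 2⁻¹)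
        (by norm_num : (2:ℝ)⁻¹ < 1)) |>.congr (by
          intro j; rw [inv_pow, div_eq_mul_inv])
  have hle0 : g t ≤ 0 := ge_of_tendsto' htend hgle
  have hinv : 0 < (1 - r)⁻¹ := inv_pos.mpr (by linarith)
  have h0t : 0 ≤ t := le_trans (by linarith : (0:ℝ) ≤ t₀ + (1 - r)⁻¹) ht
  have := hg0 t h0t
  linarith
end

section
/- Let m > n ≥ 1 and set ε = (m-n)/3, k = n + 2ε + 1. Let h : [1, T₀] → [1, ∞) be a C¹ non-decreasing function with h(1) ≥ 1 satisfying (1+t)^{-2/k} ≤ C₀ A^{1/k} h'(t) h(t)^{-(m+1)/k} for all t ∈ [1, T₀], where A ≥ 1 and C₀ > 0. Then T₀ ≤ C (1 + A^{3/(n+2m-3)}) for a constant C depending only on m, n, C₀. -/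
open Real Set

set_option maxHeartbeats 1000000

theorem stmt13 (m n C₀ : ℝ) (hn : 1 ≤ n) (hmn : n < m) (hC₀ : 0 < C₀) :
    ∃ C : ℝ, 0 < C ∧ ∀ (A T₀ : ℝ) (h h' : ℝ → ℝ), 1 ≤ A → 1 ≤ T₀ →
      (∀ t ∈ Set.Icc (1:ℝ) T₀, HasDerivAt h (h' t) t) →
      MonotoneOn h (Set.Icc (1:ℝ) T₀) →
      1 ≤ h 1 →
      (∀ t ∈ Set.Icc (1:ℝ) T₀, 1 ≤ h t) →
      (∀ t ∈ Set.Icc (1:ℝ) T₀,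
        (1 + t) ^ (-(2 / (n + 2 * ((m - n) / 3) + 1))) ≤
          C₀ * A ^ (1 / (n + 2 * ((m - n) / 3) + 1)) * h' t *
            h t ^ (-((m + 1) / (n + 2 * ((m - n) / 3) + 1)))) →
      T₀ ≤ C * (1 + A ^ (3 / (n + 2 * m - 3))) := by
  set k : ℝ := n + 2 * ((m - n) / 3) + 1 with hkdef
  have hk2 : 2 < k := by rw [hkdef]; nlinarith
  have hk0 : 0 < k := by linarith
  have hmk : k < m + 1 := by rw [hkdef]; nlinarith
  set a : ℝ := 1 - 2 / k with hadef
  set b : ℝ := 1 - (m + 1) / k with hbdef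
  have ha : 0 < a := by
    have h1 : 2 / k < 1 := (div_lt_one hk0).mpr hk2
    rw [hadef]; linarith
  have hb : b < 0 := by
    have h1 : 1 < (m + 1) / k := (one_lt_div hk0).mpr hmk
    rw [hbdef]; linarith
  have hb' : 0 < -b := by linarith
  have hb0 : b ≠ 0 := hb.ne
  have ha0 : a ≠ 0 := ha.ne'
  set D : ℝ := (2 : ℝ) ^ a + a * C₀ / (-b) with hDdef
  have hD : 0 < D := by
    have h1 : (0:ℝ) < (2:ℝ) ^ a := rpow_pos_of_pos two_pos a
    have h2 : 0 < a * C₀ / (-b) := div_pos (mul_pos ha hC₀) hb'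
    rw [hDdef]; linarith
  refine ⟨D ^ (1/a), rpow_pos_of_pos hD _, ?_⟩
  intro A T₀ h h' hA hT₀ hd hmono hh1 hh hineq
  have hA0 : (0:ℝ) < A := by linarith
  set u : ℝ := C₀ * A ^ (1/k) with hudef
  have hu : 0 < u := mul_pos hC₀ (rpow_pos_of_pos hA0 _)
  set φ : ℝ → ℝ := fun t => u * h t ^ b / b - (1 + t) ^ a / a with hφdef
  have hderiv : ∀ t ∈ Icc (1:ℝ) T₀,
      HasDerivAt φ (u * (h' t * b * h t ^ (b - 1)) / b - 1 * a * (1 + t) ^ (a - 1) / a) t := by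
    intro t ht
    have h1t : (0:ℝ) < 1 + t := by have := ht.1; linarith
    have hht : (1:ℝ) ≤ h t := hh t ht
    have d1 : HasDerivAt (fun t : ℝ => (1 + t) ^ a) (1 * a * (1 + t) ^ (a - 1)) t :=
      ((hasDerivAt_id t).const_add 1).rpow_const (Or.inl h1t.ne')
    have d2 : HasDerivAt (fun t => h t ^ b) (h' t * b * h t ^ (b - 1)) t :=
      (hd t ht).rpow_const (Or.inl (by linarith))
    exact ((d2.const_mul u).div_const b).sub (d1.div_const a)
  have key : ∀ t ∈ Icc (1:ℝ) T₀,
      0 ≤ u * (h' t * b * h t ^ (b - 1)) / b - 1 * a * (1 + t) ^ (a - 1) / a := by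
    intro t ht
    have ea : a - 1 = -(2 / k) := by rw [hadef]; ring
    have eb : b - 1 = -((m + 1) / k) := by rw [hbdef]; ring
    have h0 := hineq t ht
    have e1 : u * (h' t * b * h t ^ (b - 1)) / b = u * h' t * h t ^ (b - 1) := by
      field_simp
    have e2 : 1 * a * (1 + t) ^ (a - 1) / a = (1 + t) ^ (a - 1) := by
      field_simp
    rw [e1, e2, ea, eb]
    have : C₀ * A ^ (1/k) * h' t * h t ^ (-((m + 1) / k)) = u * h' t * h t ^ (-((m+1)/k)) := by
      rw [hudef]
    linarith [h0, this ▸ h0]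
  have hmonoφ : MonotoneOn φ (Icc 1 T₀) := by
    apply monotoneOn_of_deriv_nonneg (convex_Icc 1 T₀)
    · intro x hx
      exact (hderiv x hx).continuousAt.continuousWithinAt
    · intro x hx
      rw [interior_Icc] at hx
      exact (hderiv x (Ioo_subset_Icc_self hx)).differentiableAt.differentiableWithinAt
    · intro x hx
      rw [interior_Icc] at hx
      rw [(hderiv x (Ioo_subset_Icc_self hx)).deriv]
      exact key x (Ioo_subset_Icc_self hx)
  have h1T : φ 1 ≤ φ T₀ :=
    hmonoφ (left_mem_Icc.mpr hT₀) (right_mem_Icc.mpr hT₀) hT₀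
  -- extract the power bound
  have hP1 : h 1 ^ b ≤ 1 :=
    rpow_le_one_of_one_le_of_nonpos hh1 hb.le
  have hQ0 : 0 ≤ h T₀ ^ b :=
    rpow_nonneg (by linarith [hh T₀ (right_mem_Icc.mpr hT₀)]) b
  have hdiff : u * h T₀ ^ b / b - u * h 1 ^ b / b ≤ u / (-b) := by
    have e : u * h T₀ ^ b / b - u * h 1 ^ b / b = u * (h 1 ^ b - h T₀ ^ b) / (-b) := by
      field_simp; ring
    rw [e]
    apply (div_le_div_iff_of_pos_right hb').mpr
    nlinarith [hu.le, hP1, hQ0]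
  have hstep : (1 + T₀) ^ a ≤ (1 + 1 : ℝ) ^ a + a * (u / (-b)) := by
    have e1 : φ 1 = u * h 1 ^ b / b - (1 + 1) ^ a / a := rfl
    have e2 : φ T₀ = u * h T₀ ^ b / b - (1 + T₀) ^ a / a := rfl
    rw [e1, e2] at h1T
    have h2 : (1 + T₀) ^ a / a - (1 + 1 : ℝ) ^ a / a ≤ u / (-b) := by linarith
    have h3 : (1 + T₀) ^ a / a ≤ (1 + 1 : ℝ) ^ a / a + u / (-b) := by linarith
    calc (1 + T₀) ^ a = a * ((1 + T₀) ^ a / a) := by field_simp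
      _ ≤ a * ((1 + 1 : ℝ) ^ a / a + u / (-b)) := by
          exact mul_le_mul_of_nonneg_left h3 ha.le
      _ = (1 + 1 : ℝ) ^ a + a * (u / (-b)) := by field_simp
  have hA1 : (1:ℝ) ≤ A ^ (1/k) := one_le_rpow hA (by positivity)
  have hstep2 : (1 + T₀) ^ a ≤ D * A ^ (1/k) := by
    have e2 : ((1:ℝ) + 1) = 2 := by norm_num
    have h4 : a * (u / (-b)) = (a * C₀ / (-b)) * A ^ (1/k) := by
      rw [hudef]; field_simp
    have h5 : (2:ℝ) ^ a ≤ (2:ℝ) ^ a * A ^ (1/k) := by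
      nlinarith [rpow_pos_of_pos (two_pos : (0:ℝ) < 2) a]
    rw [hDdef, add_mul]
    rw [e2] at hstep
    linarith [hstep, h4 ▸ le_refl (a * (u / (-b)))]
  have hTpos : (0:ℝ) < 1 + T₀ := by linarith
  have hfin : 1 + T₀ ≤ D ^ (1/a) * A ^ (3 / (n + 2 * m - 3)) := by
    have h6 : ((1 + T₀) ^ a) ^ (1/a) ≤ (D * A ^ (1/k)) ^ (1/a) :=
      rpow_le_rpow (rpow_nonneg hTpos.le a) hstep2 (by positivity)
    have h7 : ((1 + T₀) ^ a) ^ (1/a) = 1 + T₀ := by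
      rw [one_div, Real.rpow_rpow_inv hTpos.le ha0]
    have h8 : (D * A ^ (1/k)) ^ (1/a) = D ^ (1/a) * (A ^ (1/k)) ^ (1/a) :=
      mul_rpow hD.le (rpow_nonneg hA0.le _)
    have h9 : (A ^ (1/k)) ^ (1/a) = A ^ (1/k * (1/a)) :=
      (Real.rpow_mul hA0.le _ _).symm
    have hexp : 1/k * (1/a) = 3 / (n + 2 * m - 3) := by
      have hka : k * a = (n + 2 * m - 3) / 3 := by
        have e : k * a = k - 2 := by rw [hadef]; field_simp
        rw [e, hkdef]; ring
      rw [div_mul_div_comm, one_mul, hka, one_div_div]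
    rw [h7, h8, h9, hexp] at h6
    exact h6
  have hApow : 0 ≤ A ^ (3 / (n + 2 * m - 3)) := rpow_nonneg hA0.le _
  have hC : 0 < D ^ (1/a) := rpow_pos_of_pos hD _
  nlinarith [hfin, hApow, hC]
end

section
/- Let (X, ν) be a probability space, let p > 1, c > 0, C₀ ≥ 1, A ≥ 0. Let f : X → [0,∞) be measurable with ∫_X f dν = 1 and ∫_X f · |log f|^p dν ≤ A (with the convention 0·|log 0|^p = 0), and let ψ : X → (-∞, 0] be measurable with ∫_X e^{-cψ} dν ≤ C₀. Then there exists a constant C depending only on p, c, C₀, A such that ∫_X (-ψ)^p f dν ≤ C. -/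
open MeasureTheory Real

theorem stmt14 (p c C₀ A : ℝ) (hp : 1 < p) (hc : 0 < c) (hC₀ : 1 ≤ C₀) (hA : 0 ≤ A) :
    ∃ C : ℝ, ∀ (X : Type) (_ : MeasurableSpace X) (ν : Measure X),
      IsProbabilityMeasure ν →
      ∀ (f ψ : X → ℝ), Measurable f → (∀ x, 0 ≤ f x) → Measurable ψ → (∀ x, ψ x ≤ 0) →
      Integrable f ν →
      Integrable (fun x => f x * |Real.log (f x)| ^ p) ν →
      Integrable (fun x => Real.exp (-c * ψ x)) ν →
      (∫ x, f x ∂ν) = 1 →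
      (∫ x, f x * |Real.log (f x)| ^ p ∂ν) ≤ A →
      (∫ x, Real.exp (-c * ψ x) ∂ν) ≤ C₀ →
      ∫ x, (-ψ x) ^ p * f x ∂ν ≤ C := by
  set n : ℕ := ⌈p⌉₊ with hn
  set K : ℝ := 1 + (n.factorial : ℝ) * (2 / c) ^ n with hK
  have hKnn : 0 ≤ K := by positivity
  have h2c : (0:ℝ) < 2 / c := by positivity
  have key : ∀ t : ℝ, 0 ≤ t → t ^ p ≤ K * Real.exp (c * t / 2) := by
    intro t ht
    have hexp1 : 1 ≤ Real.exp (c * t / 2) := Real.one_le_exp (by positivity)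
    have hpow : (c * t / 2) ^ n ≤ (n.factorial : ℝ) * Real.exp (c * t / 2) := by
      have hx : (0:ℝ) ≤ c * t / 2 := by positivity
      have hsum := Real.sum_le_exp_of_nonneg hx (n + 1)
      have hterm : (c * t / 2) ^ n / (n.factorial : ℝ) ≤
          ∑ i ∈ Finset.range (n + 1), (c * t / 2) ^ i / (i.factorial : ℝ) :=
        Finset.single_le_sum (f := fun i => (c * t / 2) ^ i / (i.factorial : ℝ))
          (fun i _ => by positivity) (Finset.self_mem_range_succ n)
      have h := hterm.trans hsum
      rw [div_le_iff₀ (by positivity : (0:ℝ) < (n.factorial : ℝ))] at h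
      linarith [h]
    have htn : t ^ n ≤ (2 / c) ^ n * ((n.factorial : ℝ) * Real.exp (c * t / 2)) := by
      have heq : t ^ n = (2 / c) ^ n * (c * t / 2) ^ n := by
        rw [← mul_pow]
        congr 1
        field_simp
      rw [heq]
      exact mul_le_mul_of_nonneg_left hpow (by positivity)
    have htp : t ^ p ≤ 1 + t ^ n := by
      rcases le_or_gt t 1 with h | h
      · have h1 : t ^ p ≤ 1 := Real.rpow_le_one ht h (by linarith)
        have h2 : (0:ℝ) ≤ t ^ n := by positivity
        linarith
      · have h1 : t ^ p ≤ t ^ (n : ℝ) :=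
          Real.rpow_le_rpow_of_exponent_le h.le (Nat.le_ceil p)
        rw [Real.rpow_natCast] at h1
        linarith
    calc t ^ p ≤ 1 + t ^ n := htp
      _ ≤ Real.exp (c * t / 2) + (2 / c) ^ n * ((n.factorial : ℝ) * Real.exp (c * t / 2)) :=
          add_le_add hexp1 htn
      _ = K * Real.exp (c * t / 2) := by rw [hK]; ring
  refine ⟨(2 / c) ^ p * A + K * C₀, ?_⟩
  intro X mX ν hν f ψ hf hf0 hψ hψ0 hfi hfli hei hf1 hfA heC
  set g : X → ℝ :=
    fun x => (2 / c) ^ p * (f x * |Real.log (f x)| ^ p) + K * Real.exp (-c * ψ x) with hg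
  have h2cp : (0:ℝ) ≤ (2 / c) ^ p := Real.rpow_nonneg h2c.le p
  have hptwise : ∀ x, (-ψ x) ^ p * f x ≤ g x := by
    intro x
    have ht : 0 ≤ -ψ x := neg_nonneg.2 (hψ0 x)
    have hct : -c * ψ x = c * (-ψ x) := by ring
    have hunn : 0 ≤ f x := hf0 x
    have hent : 0 ≤ (2 / c) ^ p * (f x * |Real.log (f x)| ^ p) := by
      have : (0:ℝ) ≤ |Real.log (f x)| ^ p := Real.rpow_nonneg (abs_nonneg _) p
      positivity
    have hexpnn : 0 ≤ K * Real.exp (-c * ψ x) := by positivity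
    rcases le_or_gt (f x) (Real.exp (c * (-ψ x) / 2)) with h | h
    · have h1 : (-ψ x) ^ p * f x ≤
          (K * Real.exp (c * (-ψ x) / 2)) * Real.exp (c * (-ψ x) / 2) :=
        mul_le_mul (key _ ht) h hunn (by positivity)
      have h2 : (K * Real.exp (c * (-ψ x) / 2)) * Real.exp (c * (-ψ x) / 2)
          = K * Real.exp (-c * ψ x) := by
        rw [mul_assoc, ← Real.exp_add]
        congr 1
        ring
      rw [h2] at h1
      simp only [hg]
      exact le_add_of_nonneg_of_le hent h1
    · have hupos : (0:ℝ) < f x := lt_trans (Real.exp_pos _) h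
      have hlog : c * (-ψ x) / 2 ≤ Real.log (f x) :=
        (Real.le_log_iff_exp_le hupos).2 h.le
      have hlognn : 0 ≤ Real.log (f x) := le_trans (by positivity) hlog
      have htle : -ψ x ≤ (2 / c) * Real.log (f x) := by
        rw [← sub_nonneg]
        have : (2 / c) * Real.log (f x) - (-ψ x)
            = (2 / c) * (Real.log (f x) - c * (-ψ x) / 2) := by
          field_simp
        rw [this]
        exact mul_nonneg h2c.le (by linarith)
      have h1 : (-ψ x) ^ p ≤ ((2 / c) * Real.log (f x)) ^ p :=
        Real.rpow_le_rpow ht htle (by linarith)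
      have h2 : ((2 / c) * Real.log (f x)) ^ p = (2 / c) ^ p * Real.log (f x) ^ p :=
        Real.mul_rpow h2c.le hlognn
      have h3 : Real.log (f x) ^ p = |Real.log (f x)| ^ p := by
        rw [abs_of_nonneg hlognn]
      have h4 : (-ψ x) ^ p * f x ≤ (2 / c) ^ p * (f x * |Real.log (f x)| ^ p) := by
        calc (-ψ x) ^ p * f x ≤ ((2 / c) ^ p * |Real.log (f x)| ^ p) * f x := by
              apply mul_le_mul_of_nonneg_right _ hunn
              rw [← h3, ← h2]
              exact h1
          _ = (2 / c) ^ p * (f x * |Real.log (f x)| ^ p) := by ring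
      simp only [hg]
      exact le_add_of_le_of_nonneg h4 hexpnn
  have hgint : Integrable g ν := (hfli.const_mul _).add (hei.const_mul _)
  have hLm : Measurable fun x => (-ψ x) ^ p * f x :=
    (((Real.continuous_rpow_const (by linarith : (0:ℝ) ≤ p)).measurable).comp hψ.neg).mul hf
  have hLint : Integrable (fun x => (-ψ x) ^ p * f x) ν := by
    apply hgint.mono' hLm.aestronglyMeasurable
    filter_upwards with x
    rw [Real.norm_eq_abs, abs_of_nonneg
      (mul_nonneg (Real.rpow_nonneg (neg_nonneg.2 (hψ0 x)) p) (hf0 x))]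
    exact hptwise x
  calc ∫ x, (-ψ x) ^ p * f x ∂ν ≤ ∫ x, g x ∂ν := integral_mono hLint hgint hptwise
    _ = (2 / c) ^ p * ∫ x, f x * |Real.log (f x)| ^ p ∂ν
        + K * ∫ x, Real.exp (-c * ψ x) ∂ν := by
        simp only [hg]
        rw [integral_add (hfli.const_mul _) (hei.const_mul _),
          integral_const_mul, integral_const_mul]
    _ ≤ (2 / c) ^ p * A + K * C₀ :=
        add_le_add (mul_le_mul_of_nonneg_left hfA h2cp)
          (mul_le_mul_of_nonneg_left heC hKnn)
end
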